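/- Sinh-log coefficient identity (Lemma 2.6 and Corollary 2.7, word form). Fix n ≥ 1 and ε ∈ ℝ, and define the partial sinh-log coefficients C_1 = 1, C_k = (1/2)(−1)^{k−1} for 2 ≤ k ≤ n, and C_{n+1} = (1/2)(−1)^n + ε. Then for every word w = a_1⋯a_{n+1} of length n+1 over A, Σ_{k=1}^{n+1} C_k Σ_{(u_1,…,u_k) : each u_i nonempty, u_1⋯u_k = w} u_1 ⧢ ⋯ ⧢ u_k = (1/2)( a_1⋯a_{n+1} − (−1)^{n+1} a_{n+1}⋯a_1 ) + ε ( a_1 ⧢ a_2 ⧢ ⋯ ⧢ a_{n+1} ), i.e. the sum equals (1/2)(w − α(w)) + ε times the full shuffle of the letters of w. -/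

import Mathlib

/-!
Words over an alphabet `A` are elements of `List A`; the free noncommutative
algebra `ℝ⟨A⟩` is realised as the free `ℝ`-module `List A →₀ ℝ` with the words
as an `ℝ`-basis (a word `w` is the element `Finsupp.single w 1`, and
concatenation of words is list append).
-/

variable {A : Type*}

/-- The shuffle product of two words, valued in `ℝ⟨A⟩ = List A →₀ ℝ`:
`1 ⧢ w = w ⧢ 1 = w` and
`(a·u) ⧢ (b·v) = a·(u ⧢ (b·v)) + b·((a·u) ⧢ v)`,
where prepending a letter to every word of an element is `Finsupp.mapDomain (List.cons _)`. -/
noncomputable def shuffle : List A → List A → (List A →₀ ℝ)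
  | [], v => Finsupp.single v 1
  | u, [] => Finsupp.single u 1
  | a :: u, b :: v =>
      Finsupp.mapDomain (List.cons a) (shuffle u (b :: v)) +
        Finsupp.mapDomain (List.cons b) (shuffle (a :: u) v)
  termination_by u v => u.length + v.length

/-- The bilinear extension of the shuffle product to all of `ℝ⟨A⟩`. -/
noncomputable def shP (P Q : List A →₀ ℝ) : List A →₀ ℝ :=
  P.sum fun u cu => Q.sum fun v cv => (cu * cv) • shuffle u v

/-- The shuffle product `u₁ ⧢ u₂ ⧢ ⋯ ⧢ u_k` of a finite list of words
(the empty shuffle being the empty word, the unit of the shuffle algebra). -/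
noncomputable def shuffleList (L : List (List A)) : List A →₀ ℝ :=
  L.foldr (fun u acc => shP (Finsupp.single u 1) acc) (Finsupp.single [] 1)

/-- The unsigned reversal `ρ`, with `ρ(a₁⋯aₙ) = aₙ⋯a₁` on words, extended linearly. -/
noncomputable def rho (P : List A →₀ ℝ) : List A →₀ ℝ :=
  Finsupp.mapDomain List.reverse P

/-- The signed reversal `α`, with `α(a₁⋯aₙ) = (-1)ⁿ aₙ⋯a₁` on words, extended linearly. -/
noncomputable def alphaMap (P : List A →₀ ℝ) : List A →₀ ℝ :=
  P.sum fun w c => Finsupp.single w.reverse ((-1 : ℝ) ^ w.length * c)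

/-- `D w = Σ_{k=1}^{|w|} (−1)^{k−1} Σ_{u₁⋯u_k = w, each uᵢ nonempty} u₁ ⧢ ⋯ ⧢ u_k`:
the ordered decompositions of `w` into `k` nonempty factors are parametrised by the
compositions `c` of `|w|` with `c.length = k`, the factors being
`w.splitWrtComposition c`. -/
noncomputable def D (w : List A) : List A →₀ ℝ :=
  ∑ c : Composition w.length,
    ((-1 : ℝ)) ^ (c.length - 1) • shuffleList (w.splitWrtComposition c)

/-- The partial sinh-log coefficients: `C 1 = 1`, `C k = (1/2)(−1)^{k−1}` for
`2 ≤ k ≤ n`, and `C (n+1) = (1/2)(−1)ⁿ + ε`. -/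
noncomputable def sinhlogC (n : ℕ) (ε : ℝ) (k : ℕ) : ℝ :=
  if k = n + 1 then (1 / 2) * (-1 : ℝ) ^ n + ε
  else if k = 1 then 1
  else (1 / 2) * (-1 : ℝ) ^ (k - 1)

/-!
Write `C_k = -½(-1)^k + ½[k = 1] + ε[k = n + 1]`. The terms `k = 1` and `k = n + 1` give
`½ w` and `ε (a₁ ⧢ ⋯ ⧢ a_{n+1})`, and the alternating part is `-½ S(w)` with
`S(w) = Σ_k (-1)^k Σ_{u₁⋯u_k = w} u₁ ⧢ ⋯ ⧢ u_k`, Takeuchi's formula for the antipode of the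
shuffle algebra with the deconcatenation coproduct. So it suffices that `S = α`.

Splitting off the first factor gives `S(a t) = -Σ_{x y = t} (a x) ⧢ S(y)`, and `α` obeys the
same recursion because `Σ_{x y = w} x ⧢ α(y) = 0` for every nonempty `w`. For the latter,
expanding `(a x) ⧢ α(y z) = (a x) ⧢ (-z · α(y))` by the first letters shows that the sum for
`a s z` is the sum for `s z` prefixed by `a` minus the sum for `a s` prefixed by `z`.
-/

open Finset

lemma shuffle_nil_left (v : List A) : shuffle [] v = Finsupp.single v 1 := by
  cases v <;> simp [shuffle]

lemma shuffle_nil_right (u : List A) : shuffle u [] = Finsupp.single u 1 := by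
  cases u <;> simp [shuffle]

noncomputable def prepend (a : A) : (List A →₀ ℝ) →ₗ[ℝ] List A →₀ ℝ :=
  Finsupp.lmapDomain ℝ ℝ (List.cons a)

lemma prepend_single (a : A) (w : List A) (c : ℝ) :
    prepend a (Finsupp.single w c) = Finsupp.single (a :: w) c :=
  Finsupp.mapDomain_single

lemma shuffle_cons_cons (a b : A) (u v : List A) :
    shuffle (a :: u) (b :: v) =
      prepend a (shuffle u (b :: v)) + prepend b (shuffle (a :: u) v) := by
  rw [shuffle]
  rfl

noncomputable def shuffleLeft (u : List A) : (List A →₀ ℝ) →ₗ[ℝ] List A →₀ ℝ :=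
  Finsupp.lsum ℝ fun v => LinearMap.toSpanSingleton ℝ _ (shuffle u v)

lemma shuffleLeft_single (u v : List A) (c : ℝ) :
    shuffleLeft u (Finsupp.single v c) = c • shuffle u v := by
  simp [shuffleLeft]

lemma shuffleLeft_nil : shuffleLeft ([] : List A) = LinearMap.id := by
  ext v : 2
  simp [shuffleLeft_single, shuffle_nil_left]

lemma shP_single_one_left (u : List A) (Q : List A →₀ ℝ) :
    shP (Finsupp.single u 1) Q = shuffleLeft u Q := by
  rw [shP, Finsupp.sum_single_index (by simp), shuffleLeft, Finsupp.lsum_apply]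
  simp only [one_mul]
  rfl

lemma shuffleList_nil : shuffleList ([] : List (List A)) = Finsupp.single [] 1 := rfl

lemma shuffleList_cons (u : List A) (L : List (List A)) :
    shuffleList (u :: L) = shuffleLeft u (shuffleList L) :=
  shP_single_one_left u _

lemma shuffleList_singleton (u : List A) : shuffleList [u] = Finsupp.single u 1 := by
  rw [shuffleList_cons, shuffleList_nil, shuffleLeft_single, one_smul, shuffle_nil_right]

lemma alphaMap_single (w : List A) :
    alphaMap (Finsupp.single w 1) = (-1 : ℝ) ^ w.length • Finsupp.single w.reverse 1 := by
  rw [alphaMap, Finsupp.sum_single_index (by simp), mul_one, Finsupp.smul_single_one]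

section Deconcatenation

variable {M : Type*} [AddCommMonoid M] (f : List A → List A → M)

lemma sum_range_take_drop_cons (a : A) (t : List A) :
    ∑ i ∈ range ((a :: t).length + 1), f ((a :: t).take i) ((a :: t).drop i) =
      f [] (a :: t) + ∑ i ∈ range (t.length + 1), f (a :: t.take i) (t.drop i) := by
  rw [List.length_cons, sum_range_succ', add_comm]
  simp

lemma sum_range_take_drop_concat (s : List A) (z : A) :
    ∑ i ∈ range ((s ++ [z]).length + 1), f ((s ++ [z]).take i) ((s ++ [z]).drop i) =
      ∑ i ∈ range (s.length + 1), f (s.take i) (s.drop i ++ [z]) + f (s ++ [z]) [] := by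
  rw [List.length_append, List.length_singleton, sum_range_succ]
  congr 1
  · refine sum_congr rfl fun i hi => ?_
    have hi : i ≤ s.length := Nat.lt_succ_iff.mp (mem_range.mp hi)
    rw [List.take_append_of_le_length hi, List.drop_append_of_le_length hi]
  · rw [List.take_of_length_le (by simp), List.drop_of_length_le (by simp)]

end Deconcatenation

noncomputable def shuffleAlpha (x y : List A) : List A →₀ ℝ :=
  shuffleLeft x (alphaMap (Finsupp.single y 1))

lemma shuffleAlpha_eq (x y : List A) :
    shuffleAlpha x y = (-1 : ℝ) ^ y.length • shuffle x y.reverse := by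
  rw [shuffleAlpha, alphaMap_single, map_smul, shuffleLeft_single, one_smul]

lemma shuffleAlpha_nil_right (x : List A) : shuffleAlpha x [] = Finsupp.single x 1 := by
  simp [shuffleAlpha_eq, shuffle_nil_right]

lemma shuffleAlpha_cons_nil (a : A) (x : List A) :
    shuffleAlpha (a :: x) [] = prepend a (shuffleAlpha x []) := by
  simp [shuffleAlpha_nil_right, prepend_single]

lemma shuffleAlpha_nil_concat (y : List A) (z : A) :
    shuffleAlpha [] (y ++ [z]) = -prepend z (shuffleAlpha [] y) := by
  simp [shuffleAlpha_eq, shuffle_nil_left, prepend_single, pow_succ]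

lemma shuffleAlpha_cons_concat (a z : A) (x y : List A) :
    shuffleAlpha (a :: x) (y ++ [z]) =
      prepend a (shuffleAlpha x (y ++ [z])) - prepend z (shuffleAlpha (a :: x) y) := by
  simp only [shuffleAlpha_eq, List.reverse_append, List.reverse_singleton, List.singleton_append,
    shuffle_cons_cons, List.length_append, List.length_singleton, pow_succ, map_smul]
  module

noncomputable def shuffleAlphaConv (w : List A) : List A →₀ ℝ :=
  ∑ i ∈ range (w.length + 1), shuffleAlpha (w.take i) (w.drop i)

lemma shuffleAlphaConv_cons (a : A) (t : List A) :
    shuffleAlphaConv (a :: t) =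
      shuffleAlpha [] (a :: t) +
        ∑ i ∈ range (t.length + 1), shuffleAlpha (a :: t.take i) (t.drop i) :=
  sum_range_take_drop_cons shuffleAlpha a t

lemma shuffleAlphaConv_concat (s : List A) (z : A) :
    shuffleAlphaConv (s ++ [z]) =
      ∑ i ∈ range (s.length + 1), shuffleAlpha (s.take i) (s.drop i ++ [z]) +
        shuffleAlpha (s ++ [z]) [] :=
  sum_range_take_drop_concat shuffleAlpha s z

lemma shuffleAlphaConv_cons_concat (a z : A) (s : List A) :
    shuffleAlphaConv (a :: (s ++ [z])) =
      prepend a (shuffleAlphaConv (s ++ [z])) - prepend z (shuffleAlphaConv (a :: s)) := by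
  rw [shuffleAlphaConv_cons, sum_range_take_drop_concat (fun x y => shuffleAlpha (a :: x) y),
    shuffleAlphaConv_concat, shuffleAlphaConv_cons, shuffleAlpha_cons_nil, ← List.cons_append,
    shuffleAlpha_nil_concat]
  simp only [shuffleAlpha_cons_concat, sum_sub_distrib, map_add, map_sum]
  abel

lemma shuffleAlphaConv_eq_zero {w : List A} (hw : w ≠ []) : shuffleAlphaConv w = 0 := by
  induction h : w.length using Nat.strong_induction_on generalizing w with
  | _ n ih =>
    obtain _ | ⟨a, t⟩ := w
    · exact absurd rfl hw
    obtain rfl | ⟨s, z, rfl⟩ := t.eq_nil_or_concat'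
    · simp [shuffleAlphaConv, sum_range_succ, shuffleAlpha_eq, shuffle_nil_left,
        shuffle_nil_right]
    · subst h
      rw [shuffleAlphaConv_cons_concat, ih _ (by simp) (by simp) rfl,
        ih _ (by simp) (by simp) rfl, map_zero, map_zero, sub_zero]

namespace Composition

lemma blocks_eq_head!_cons_tail {n : ℕ} (c : Composition (n + 1)) :
    c.blocks = c.blocks.head! :: c.blocks.tail :=
  (List.cons_head!_tail (c.blocks_eq_nil.not.mpr n.succ_ne_zero)).symm

lemma head!_blocks_add_sum_tail {n : ℕ} (c : Composition (n + 1)) :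
    c.blocks.head! + c.blocks.tail.sum = n + 1 := by
  rw [← List.sum_cons, ← blocks_eq_head!_cons_tail, c.blocks_sum]

lemma head!_blocks_pos {n : ℕ} (c : Composition (n + 1)) : 0 < c.blocks.head! :=
  c.blocks_pos (c.blocks_eq_head!_cons_tail ▸ List.mem_cons_self)

def equivSigmaFirstBlock (n : ℕ) :
    Composition (n + 1) ≃ Σ i : Fin (n + 1), Composition (n - i) where
  toFun c :=
    ⟨⟨c.blocks.head! - 1, by have := c.head!_blocks_add_sum_tail; omega⟩,
      ⟨c.blocks.tail, fun hi => c.blocks_pos (List.mem_of_mem_tail hi),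
        by have := c.head!_blocks_add_sum_tail; have := c.head!_blocks_pos; simp only; omega⟩⟩
  invFun p :=
    ⟨(p.1 + 1 : ℕ) :: p.2.blocks,
      by
        rintro i (_ | ⟨_, hi⟩)
        · omega
        · exact p.2.blocks_pos hi,
      by have := p.2.blocks_sum; have := p.1.isLt; simp only [List.sum_cons]; omega⟩
  left_inv c := by
    ext1
    have := c.head!_blocks_pos
    simp only
    rw [Nat.sub_add_cancel this, ← blocks_eq_head!_cons_tail]
  right_inv _ := rfl

@[simp]
lemma equivSigmaFirstBlock_symm_apply_blocks {n : ℕ} (i : Fin (n + 1)) (c : Composition (n - i)) :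
    ((equivSigmaFirstBlock n).symm ⟨i, c⟩).blocks = (i + 1 : ℕ) :: c.blocks :=
  rfl

instance : Subsingleton (Composition 0) :=
  ⟨fun c d => Composition.ext (by rw [c.blocks_eq_nil.mpr rfl, d.blocks_eq_nil.mpr rfl])⟩

end Composition

/-- Takeuchi's formula for the antipode of the shuffle algebra with the deconcatenation
coproduct. -/
noncomputable def antipode (w : List A) : List A →₀ ℝ :=
  ∑ c : Composition w.length, (-1 : ℝ) ^ c.length • shuffleList (w.splitWrtComposition c)

lemma antipode_eq_sum_of_length_eq {w : List A} {m : ℕ} (h : w.length = m) :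
    antipode w =
      ∑ c : Composition m, (-1 : ℝ) ^ c.length • shuffleList (w.splitWrtComposition c) := by
  subst h
  rfl

lemma antipode_nil : antipode ([] : List A) = Finsupp.single [] 1 := by
  rw [antipode_eq_sum_of_length_eq (m := 0) rfl, Fintype.sum_subsingleton _ (Composition.ones 0)]
  simp [List.splitWrtComposition, List.splitWrtCompositionAux, shuffleList_nil]

lemma antipode_cons (a : A) (t : List A) :
    antipode (a :: t) =
      -∑ i ∈ range (t.length + 1), shuffleLeft (a :: t.take i) (antipode (t.drop i)) := by
  rw [antipode, List.length_cons, ← (Composition.equivSigmaFirstBlock t.length).symm.sum_comp,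
    Fintype.sum_sigma, ← Fin.sum_univ_eq_sum_range, ← sum_neg_distrib]
  refine sum_congr rfl fun i _ => ?_
  rw [antipode_eq_sum_of_length_eq (List.length_drop ..), map_sum, ← sum_neg_distrib]
  refine sum_congr rfl fun c _ => ?_
  simp [List.splitWrtComposition, List.splitWrtCompositionAux_cons, Composition.length,
    shuffleList_cons, pow_succ]

theorem antipode_eq_alphaMap (w : List A) : antipode w = alphaMap (Finsupp.single w 1) := by
  induction h : w.length using Nat.strong_induction_on generalizing w with
  | _ n ih =>
    obtain _ | ⟨a, t⟩ := w
    · simp [antipode_nil, alphaMap_single]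
    have hterm : ∀ i ∈ range (t.length + 1),
        shuffleLeft (a :: t.take i) (antipode (t.drop i)) =
          shuffleAlpha (a :: t.take i) (t.drop i) :=
      fun i _ => by rw [ih _ (by simp [← h]) _ rfl, shuffleAlpha]
    have hconv := shuffleAlphaConv_cons a t
    rw [shuffleAlphaConv_eq_zero (List.cons_ne_nil a t), shuffleAlpha, shuffleLeft_nil,
      eq_comm, add_eq_zero_iff_eq_neg'] at hconv
    rw [antipode_cons, sum_congr rfl hterm, hconv, LinearMap.id_apply, neg_neg]

lemma List.splitWrtComposition_single {w : List A} {n : ℕ} (h : w.length = n) (hn : 0 < n) :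
    w.splitWrtComposition (Composition.single n hn) = [w] := by
  simp [List.splitWrtComposition, List.splitWrtCompositionAux_cons, List.splitWrtCompositionAux,
    List.take_of_length_le, h.le]

lemma List.splitWrtComposition_ones {w : List A} {n : ℕ} (h : w.length = n) :
    w.splitWrtComposition (Composition.ones n) = w.map fun x => [x] := by
  subst h
  induction w with
  | nil => rfl
  | cons a t ih =>
    simpa [List.splitWrtComposition, List.replicate_succ, List.splitWrtCompositionAux_cons] using ih

lemma sinhlogC_eq {n k : ℕ} (hn : 1 ≤ n) (hk : 1 ≤ k) (ε : ℝ) :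
    sinhlogC n ε k =
      -(1 / 2) * (-1) ^ k + (if k = 1 then 1 / 2 else 0) + (if k = n + 1 then ε else 0) := by
  obtain ⟨k, rfl⟩ := Nat.exists_eq_add_of_le' hk
  unfold sinhlogC
  split_ifs with hkn hk1 hk1
  · omega
  · obtain rfl : k = n := by omega
    ring
  · obtain rfl : k = 0 := by omega
    norm_num
  · rw [Nat.add_sub_cancel]
    ring

/-- **Sinh-log coefficient identity** (Lemma 2.6 and Corollary 2.7, word form): for any
word `w = a₁⋯a_{n+1}`,
`Σ_{k=1}^{n+1} C_k Σ_{u₁⋯u_k = w, uᵢ nonempty} u₁ ⧢ ⋯ ⧢ u_k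
  = (1/2)(w − (−1)^{n+1} a_{n+1}⋯a₁) + ε (a₁ ⧢ ⋯ ⧢ a_{n+1})`,
the decompositions into `k` nonempty factors being parametrised by the compositions
`c` of `n+1` with `c.length = k`. -/
theorem sinhlog_coefficient_identity (n : ℕ) (hn : 1 ≤ n) (ε : ℝ) (a : Fin (n + 1) → A) :
    ∑ c : Composition (n + 1),
        sinhlogC n ε c.length • shuffleList ((List.ofFn a).splitWrtComposition c) =
      (1 / 2 : ℝ) •
          (Finsupp.single (List.ofFn a) (1 : ℝ) -
            ((-1 : ℝ)) ^ (n + 1) • Finsupp.single (List.ofFn a).reverse (1 : ℝ)) +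
        ε • shuffleList ((List.ofFn a).map fun x => [x]) := by
  have hw : (List.ofFn a).length = n + 1 := List.length_ofFn
  have hpos : 0 < n + 1 := n.succ_pos
  have hC (c : Composition (n + 1)) : sinhlogC n ε c.length =
      -(1 / 2) * (-1) ^ c.length + (if c = Composition.single (n + 1) hpos then 1 / 2 else 0) +
        (if c = Composition.ones (n + 1) then ε else 0) := by
    simp only [Composition.eq_single_iff_length hpos, Composition.eq_ones_iff_length]
    exact sinhlogC_eq hn (c.length_pos_iff.mpr hpos) ε
  simp only [hC, add_smul, mul_smul, ite_smul, zero_smul, sum_add_distrib, sum_ite_eq',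
    mem_univ, if_true, ← smul_sum, ← antipode_eq_sum_of_length_eq hw, antipode_eq_alphaMap,
    alphaMap_single, List.splitWrtComposition_single hw, List.splitWrtComposition_ones hw,
    shuffleList_singleton, hw]
  module
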